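/- If E[Z | G] = p with 0 < p < 1 a.s. and (Y₁,Y₀) ⫫ Z | G, then the conditional expectation of the observed outcome given treatment status recovers the conditional mean of the corresponding potential outcome: E[Z·Y | G] = p·E[Y₁ | G] and E[(1−Z)·Y | G] = (1−p)·E[Y₀ | G], where Y = Z·Y₁ + (1−Z)·Y₀. -/

import Mathlib

open MeasureTheory ProbabilityTheory

/-! Conditional independence given `G` means that, for almost every `ω`, the two variables are
independent under the regular conditional probability `condExpKernel μ G ω`; integrating against
that kernel turns the unconditional product rule `E[XY] = E[X]E[Y]` into
`E[XY | G] = E[X | G] E[Y | G]`. Since `Z` is binary, `Z Y = Z Y₁` and `(1 - Z) Y = (1 - Z) Y₀`,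
so the identification follows from this product rule applied to `(Y₁, Z)` and `(Y₀, 1 - Z)`. -/

namespace ProbabilityTheory

variable {Ω : Type*} {m' mΩ : MeasurableSpace Ω} [StandardBorelSpace Ω]
  {hm' : m' ≤ mΩ} {μ : Measure Ω} [IsFiniteMeasure μ] {X Y : Ω → ℝ}

theorem CondIndepFun.ae_indepFun_condExpKernel (hXY : CondIndepFun m' hm' X Y μ)
    (hX : Measurable X) (hY : Measurable Y) :
    ∀ᵐ ω ∂μ, IndepFun X Y (condExpKernel μ m' ω) := by
  have h_map := (condIndepFun_iff_map_prod_eq_prod_map_map hX hY).1 hXY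
  filter_upwards [ae_of_ae_trim hm' h_map] with ω hω
  rw [indepFun_iff_map_prod_eq_prod_map_map hX.aemeasurable hY.aemeasurable]
  simpa only [Kernel.map_apply _ (hX.prodMk hY), Kernel.prod_apply,
    Kernel.map_apply _ hX, Kernel.map_apply _ hY] using hω

theorem CondIndepFun.condExp_mul (hXY : CondIndepFun m' hm' X Y μ)
    (hX : Measurable X) (hY : Measurable Y) (hXi : Integrable X μ) (hYi : Integrable Y μ)
    (hXYi : Integrable (fun ω => X ω * Y ω) μ) :
    μ[fun ω => X ω * Y ω | m'] =ᵐ[μ] fun ω => μ[X | m'] ω * μ[Y | m'] ω := by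
  filter_upwards [condExp_ae_eq_integral_condExpKernel hm' hXYi,
    condExp_ae_eq_integral_condExpKernel hm' hXi, condExp_ae_eq_integral_condExpKernel hm' hYi,
    hXY.ae_indepFun_condExpKernel hX hY] with ω hXYω hXω hYω h_indep
  rw [hXYω, hXω, hYω,
    h_indep.integral_fun_mul_eq_mul_integral hX.aestronglyMeasurable hY.aestronglyMeasurable]

end ProbabilityTheory

theorem condExp_one_sub {Ω : Type*} {m mΩ : MeasurableSpace Ω} {μ : Measure Ω}
    [IsFiniteMeasure μ] (hm : m ≤ mΩ) {f : Ω → ℝ} (hf : Integrable f μ) :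
    μ[fun ω => 1 - f ω | m] =ᵐ[μ] fun ω => 1 - μ[f | m] ω := by
  have h := condExp_sub (m := m) (integrable_const (1 : ℝ)) hf
  rw [condExp_const hm] at h
  exact h

theorem condExp_observed_identification_general
    {Ω : Type*} {mΩ : MeasurableSpace Ω} [StandardBorelSpace Ω]
    (μ : Measure Ω) [IsProbabilityMeasure μ]
    (G : MeasurableSpace Ω) (hG : G ≤ mΩ)
    (Z Y₁ Y₀ p Y : Ω → ℝ)
    (hZmeas : Measurable[mΩ] Z)
    (hZ01 : ∀ ω, Z ω = 0 ∨ Z ω = 1)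
    (hY₁meas : Measurable[mΩ] Y₁) (hY₀meas : Measurable[mΩ] Y₀)
    (hp : p = μ[Z | G])
    (hY₁int : Integrable Y₁ μ) (hY₀int : Integrable Y₀ μ)
    (hZY₁int : Integrable (fun ω => Z ω * Y₁ ω) μ)
    (hZY₀int : Integrable (fun ω => (1 - Z ω) * Y₀ ω) μ)
    (hY : Y = fun ω => Z ω * Y₁ ω + (1 - Z ω) * Y₀ ω)
    (hindep : CondIndepFun G hG (fun ω => (Y₁ ω, Y₀ ω)) Z μ) :
    (μ[fun ω => Z ω * Y ω | G] =ᵐ[μ] fun ω => p ω * (μ[Y₁ | G]) ω) ∧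
      (μ[fun ω => (1 - Z ω) * Y ω | G] =ᵐ[μ] fun ω => (1 - p ω) * (μ[Y₀ | G]) ω) := by
  subst hp hY
  have hZint : Integrable Z μ := by
    refine (integrable_const (1 : ℝ)).mono' hZmeas.aestronglyMeasurable (.of_forall fun ω => ?_)
    rcases hZ01 ω with h | h <;> simp [h]
  have h_treated_outcome :
      (fun ω => Z ω * (Z ω * Y₁ ω + (1 - Z ω) * Y₀ ω)) = fun ω => Z ω * Y₁ ω := by
    funext ω; rcases hZ01 ω with h | h <;> simp [h]
  have h_control_outcome : (fun ω => (1 - Z ω) * (Z ω * Y₁ ω + (1 - Z ω) * Y₀ ω)) =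
      fun ω => (1 - Z ω) * Y₀ ω := by
    funext ω; rcases hZ01 ω with h | h <;> simp [h]
  have h_treated : CondIndepFun G hG Z Y₁ μ := (hindep.comp measurable_fst measurable_id).symm
  have h_control : CondIndepFun G hG (fun ω => 1 - Z ω) Y₀ μ :=
    (hindep.comp measurable_snd (measurable_const.sub measurable_id)).symm
  rw [h_treated_outcome, h_control_outcome]
  refine ⟨h_treated.condExp_mul hZmeas hY₁meas hZint hY₁int hZY₁int, ?_⟩
  filter_upwards [h_control.condExp_mul (measurable_const.sub hZmeas) hY₀meas
    ((integrable_const 1).sub hZint) hY₀int hZY₀int, condExp_one_sub hG hZint] with ω h h'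
  rw [h, h']

/-- Conditional identification: if `E[Z|G] = p` with `0 < p < 1` a.s. and the pair
`(Y₁, Y₀)` is conditionally independent of `Z` given `G`, then for the observed outcome
`Y = Z·Y₁ + (1−Z)·Y₀` one has `E[Z·Y | G] = p·E[Y₁ | G]` and
`E[(1−Z)·Y | G] = (1−p)·E[Y₀ | G]` a.e. -/
theorem condExp_observed_identification
    {Ω : Type*} {mΩ : MeasurableSpace Ω} [StandardBorelSpace Ω] [Nonempty Ω]
    (μ : Measure Ω) [IsProbabilityMeasure μ]
    (G : MeasurableSpace Ω) (hG : G ≤ mΩ)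
    (Z Y₁ Y₀ p Y : Ω → ℝ)
    (hZmeas : Measurable[mΩ] Z)
    (hZ01 : ∀ ω, Z ω = 0 ∨ Z ω = 1)
    (hY₁meas : Measurable[mΩ] Y₁) (hY₀meas : Measurable[mΩ] Y₀)
    (hp : p = μ[Z | G])
    (hpos : ∀ᵐ ω ∂μ, 0 < p ω ∧ p ω < 1)
    (hY₁int : Integrable Y₁ μ) (hY₀int : Integrable Y₀ μ)
    (hZY₁int : Integrable (fun ω => Z ω * Y₁ ω) μ)
    (hZY₀int : Integrable (fun ω => (1 - Z ω) * Y₀ ω) μ)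
    (hY : Y = fun ω => Z ω * Y₁ ω + (1 - Z ω) * Y₀ ω)
    (hindep : CondIndepFun G hG (fun ω => (Y₁ ω, Y₀ ω)) Z μ) :
    (μ[fun ω => Z ω * Y ω | G] =ᵐ[μ] fun ω => p ω * (μ[Y₁ | G]) ω) ∧
      (μ[fun ω => (1 - Z ω) * Y ω | G] =ᵐ[μ] fun ω => (1 - p ω) * (μ[Y₀ | G]) ω) :=
  condExp_observed_identification_general μ G hG Z Y₁ Y₀ p Y hZmeas hZ01 hY₁meas hY₀meas hp hY₁int
    hY₀int hZY₁int hZY₀int hY hindep
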